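/- Let G be a finite connected cograph. Then μ(G) = μt(G) if and only if G has a universal vertex or G has no enabling vertex. -/

import Mathlib

open SimpleGraph

/-- Vertices `x` and `y` are `X`-visible in `G`: some shortest `x,y`-path has
no internal vertex in `X`. -/
def Visible {V : Type*} (G : SimpleGraph V) (X : Set V) (x y : V) : Prop :=
  ∃ p : G.Walk x y, p.length = G.dist x y ∧ ∀ v ∈ p.support, v ∈ X → v = x ∨ v = y

/-- `X` is a mutual-visibility set of `G`: every two vertices of `X` are `X`-visible. -/
def IsMVSet {V : Type*} (G : SimpleGraph V) (X : Set V) : Prop :=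
  ∀ x ∈ X, ∀ y ∈ X, Visible G X x y

/-- `X` is a total mutual-visibility set of `G`: every two vertices of `G` are
`X`-visible. -/
def IsTMVSet {V : Type*} (G : SimpleGraph V) (X : Set V) : Prop :=
  ∀ x y : V, Visible G X x y

/-- The mutual-visibility number of `G`: the maximum cardinality of a
mutual-visibility set. -/
noncomputable def mu {V : Type*} (G : SimpleGraph V) : ℕ :=
  sSup {n | ∃ X : Set V, IsMVSet G X ∧ X.ncard = n}

/-- The total mutual-visibility number of `G`: the maximum cardinality of a total
mutual-visibility set. -/
noncomputable def muT {V : Type*} (G : SimpleGraph V) : ℕ :=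
  sSup {n | ∃ X : Set V, IsTMVSet G X ∧ X.ncard = n}

/-- A feasible total mutual-visibility set: a total mutual-visibility set `S` such that
any two adjacent vertices of `S` have a common neighbor outside `S`. -/
def IsFeasibleTMVSet {V : Type*} (G : SimpleGraph V) (S : Set V) : Prop :=
  IsTMVSet G S ∧ ∀ x ∈ S, ∀ y ∈ S, G.Adj x y → ∃ z ∉ S, G.Adj x z ∧ G.Adj y z

/-- The strong product of two simple graphs. -/
def strongProd {α β : Type*} (G : SimpleGraph α) (H : SimpleGraph β) :
    SimpleGraph (α × β) where
  Adj x y := (G.Adj x.1 y.1 ∧ x.2 = y.2) ∨ (x.1 = y.1 ∧ H.Adj x.2 y.2) ∨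
    (G.Adj x.1 y.1 ∧ H.Adj x.2 y.2)
  symm := ⟨by
    rintro ⟨a, b⟩ ⟨c, d⟩ (⟨h1, h2⟩ | ⟨h1, h2⟩ | ⟨h1, h2⟩)
    · exact Or.inl ⟨h1.symm, h2.symm⟩
    · exact Or.inr (Or.inl ⟨h1.symm, h2.symm⟩)
    · exact Or.inr (Or.inr ⟨h1.symm, h2.symm⟩)⟩
  loopless := ⟨by
    rintro ⟨a, b⟩ (⟨h, _⟩ | ⟨_, h⟩ | ⟨h, _⟩)
    · exact G.loopless.irrefl a h
    · exact H.loopless.irrefl b h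
    · exact G.loopless.irrefl a h⟩

/-- The iterated (associative) strong product of a finite family of graphs:
two tuples are adjacent iff they are distinct and agree or are adjacent in every
coordinate. -/
def strongProdPi {k : ℕ} {V : Fin k → Type*} (G : ∀ i, SimpleGraph (V i)) :
    SimpleGraph (∀ i, V i) where
  Adj x y := x ≠ y ∧ ∀ i, x i = y i ∨ (G i).Adj (x i) (y i)
  symm := ⟨by
    rintro x y ⟨hne, h⟩
    exact ⟨hne.symm, fun i => (h i).imp Eq.symm fun hh => (G i).adj_symm hh⟩⟩
  loopless := ⟨fun x h => h.1 rfl⟩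

/-- A universal vertex: adjacent to all other vertices. -/
def IsUniversal {V : Type*} (G : SimpleGraph V) (v : V) : Prop :=
  ∀ u : V, u ≠ v → G.Adj v u

/-- A cut vertex: its removal disconnects the graph. -/
def IsCutVertex {V : Type*} (G : SimpleGraph V) (v : V) : Prop :=
  ¬ (G.induce ({v}ᶜ : Set V)).Preconnected

/-- An induced path: a path with no chords between its vertices. -/
def IsInducedPath {V : Type*} (G : SimpleGraph V) {u v : V} (p : G.Walk u v) : Prop :=
  p.IsPath ∧ ∀ a b : V, a ∈ p.support → b ∈ p.support → G.Adj a b → s(a, b) ∈ p.edges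

/-- A block graph: a connected graph in which every pair of vertices is joined
by a unique induced path. -/
def IsBlockGraph {V : Type*} (G : SimpleGraph V) : Prop :=
  G.Connected ∧ ∀ u v : V, ∃! p : G.Walk u v, IsInducedPath G p

/-- A convex set of vertices: every shortest path of `G` between two of its
vertices stays inside the set. -/
def IsConvexSet {V : Type*} (G : SimpleGraph V) (A : Set V) : Prop :=
  ∀ x ∈ A, ∀ y ∈ A, ∀ p : G.Walk x y, p.length = G.dist x y → ∀ v ∈ p.support, v ∈ A

/-- A cactus graph: a connected graph in which every edge lies in at most one cycle,
i.e. two cycles sharing an edge have the same edge set. -/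
def IsCactus {V : Type*} (G : SimpleGraph V) : Prop :=
  G.Connected ∧ ∀ (v : V) (p q : G.Walk v v), p.IsCycle → q.IsCycle →
    ∀ e, e ∈ p.edges → e ∈ q.edges → ∀ e', e' ∈ p.edges ↔ e' ∈ q.edges

/-- A cograph: obtained from a single vertex by repeatedly adding twins, i.e. there is
an enumeration of the vertices in which every vertex except the first is, at the
moment of its addition, a (true or false) twin of some earlier vertex in the induced
subgraph on the vertices added so far. -/
def IsCograph {V : Type*} (G : SimpleGraph V) : Prop :=
  ∃ l : List V, l.Nodup ∧ (∀ v : V, v ∈ l) ∧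
    ∀ i : Fin l.length, (i : ℕ) ≠ 0 →
      ∃ j : Fin l.length, (j : ℕ) < (i : ℕ) ∧
        ∀ z ∈ l.take ((i : ℕ) + 1), z ≠ l.get i → z ≠ l.get j →
          (G.Adj (l.get i) z ↔ G.Adj (l.get j) z)

/-- An enabling vertex: a vertex `v` adjacent to every vertex `u` of `G - v` whose
degree in `G - v` is less than `n(G) - 2`. -/
def IsEnabling {V : Type*} [Fintype V] (G : SimpleGraph V) (v : V) : Prop :=
  ∀ u : V, u ≠ v → (G.neighborSet u \ {v}).ncard < Fintype.card V - 2 → G.Adj v u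

/-!
If `w` is universal, every set avoiding `w` is a total mutual-visibility set (`w` is a common
neighbour of any two non-adjacent vertices), and a maximum mutual-visibility set can be moved
off `w`; hence `μ = μt`. Without universal vertices a total mutual-visibility set misses at least
two vertices, whereas an enabling vertex `v` makes `V ∖ {v}` a mutual-visibility set. Without
enabling vertices a mutual-visibility set misses two vertices as well, and the cograph hypothesis
supplies a total mutual-visibility set of size `n - 2`: the complement of a connected cograph on
at least two vertices is disconnected (along the twin-insertion order, once `G[S]` or `Gᶜ[S]` is
disconnected it stays so), and removing vertices `a`, `b` from different components of `Gᶜ`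
leaves a total mutual-visibility set, since two non-adjacent vertices lie in one component of
`Gᶜ` and are thus both adjacent to `a` or both to `b`.
-/

section

variable {V : Type*} {G : SimpleGraph V} {X : Set V}

lemma visible_of_exists_common_adj {x y : V}
    (h : x ≠ y → ¬G.Adj x y → ∃ c ∉ X, G.Adj x c ∧ G.Adj c y) : Visible G X x y := by
  rcases eq_or_ne x y with rfl | hne
  · exact ⟨.nil, by simp, by simp⟩
  by_cases hadj : G.Adj x y
  · exact ⟨hadj.toWalk, by simp [dist_eq_one_iff_adj.mpr hadj], by simp⟩
  obtain ⟨c, hcX, hxc, hcy⟩ := h hne hadj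
  have hdist : G.dist x y = 2 := by
    have hle : G.dist x y ≤ 2 := dist_le (.cons hxc (.cons hcy .nil))
    have hpos : 0 < G.dist x y := (hxc.reachable.trans hcy.reachable).pos_dist_of_ne hne
    have hne1 : G.dist x y ≠ 1 := mt dist_eq_one_iff_adj.mp hadj
    omega
  refine ⟨.cons hxc (.cons hcy .nil), by simp [hdist], ?_⟩
  simp only [Walk.support_cons, Walk.support_nil, List.mem_cons, List.not_mem_nil, or_false]
  rintro v (rfl | rfl | rfl) hvX
  exacts [Or.inl rfl, absurd hvX hcX, Or.inr rfl]

-- The first internal vertex of a shortest path between non-adjacent vertices is outside `X`.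
lemma Visible.exists_adj_notMem {x y : V} (h : Visible G X x y) (hne : x ≠ y)
    (hadj : ¬G.Adj x y) : ∃ w ∉ X, G.Adj x w := by
  obtain ⟨p, -, hp⟩ := h
  cases p with
  | nil => exact absurd rfl hne
  | @cons _ w _ hxw q =>
    refine ⟨w, fun hwX => ?_, hxw⟩
    rcases hp w (by simp [q.start_mem_support]) hwX with rfl | rfl
    exacts [G.irrefl hxw, hadj hxw]

lemma IsTMVSet.isMVSet (h : IsTMVSet G X) : IsMVSet G X :=
  fun x _ y _ => h x y

lemma isTMVSet_of_isUniversal {w : V} (hw : _root_.IsUniversal G w) (hwX : w ∉ X) :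
    IsTMVSet G X := by
  refine fun x y => visible_of_exists_common_adj fun hne hadj => ⟨w, hwX, ?_, ?_⟩
  · exact (hw x fun h => hadj (h ▸ hw y (h ▸ hne).symm)).symm
  · exact hw y fun h => hadj (h ▸ (hw x (h ▸ hne)).symm)

lemma isTMVSet_compl_pair {a b : V} (hab : ¬Gᶜ.Reachable a b) : IsTMVSet G {a, b}ᶜ := by
  have adj_of : ∀ {c x : V}, ¬Gᶜ.Reachable c x → G.Adj c x := fun {c x} h => by
    by_contra hnadj
    exact h (Adj.reachable ((compl_adj G c x).2 ⟨fun hcx => h (hcx ▸ .refl c), hnadj⟩))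
  refine fun x y => visible_of_exists_common_adj fun hne hadj => ?_
  have hxy : Gᶜ.Reachable x y := Adj.reachable ((compl_adj G x y).2 ⟨hne, hadj⟩)
  by_cases hax : Gᶜ.Reachable a x
  · have hbx : ¬Gᶜ.Reachable b x := fun hbx => hab (hax.trans hbx.symm)
    exact ⟨b, by simp, (adj_of hbx).symm, adj_of fun hby => hbx (hby.trans hxy.symm)⟩
  · exact ⟨a, by simp, (adj_of hax).symm, adj_of fun hay => hax (hay.trans hxy.symm)⟩

lemma not_isTMVSet_of_compl_subset_singleton {z : V} (hz : ¬_root_.IsUniversal G z)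
    (hX : Xᶜ ⊆ {z}) : ¬IsTMVSet G X := by
  intro hTMV
  obtain ⟨y, hyz, hzy⟩ : ∃ y, y ≠ z ∧ ¬G.Adj z y := by
    simpa [_root_.IsUniversal] using hz
  obtain ⟨w, hwX, hzw⟩ := (hTMV z y).exists_adj_notMem hyz.symm hzy
  exact G.irrefl (hX hwX ▸ hzw)

lemma nontrivial_of_not_isUniversal {v : V} (h : ¬_root_.IsUniversal G v) : Nontrivial V := by
  obtain ⟨u, hu, -⟩ : ∃ u, u ≠ v ∧ ¬G.Adj v u := by simpa [_root_.IsUniversal] using h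
  exact nontrivial_of_ne u v hu

/-- `G[S]` is preconnected; stated on `V` to avoid passing to the subtype `S`. -/
def PreconnectedOn (G : SimpleGraph V) (S : Set V) : Prop :=
  ∀ a ∈ S, ∀ b ∈ S, Relation.ReflTransGen (fun x y => x ∈ S ∧ y ∈ S ∧ G.Adj x y) a b

lemma preconnectedOn_univ_iff : PreconnectedOn G Set.univ ↔ G.Preconnected := by
  simp only [PreconnectedOn, Set.mem_univ, true_and, forall_const, Preconnected,
    reachable_iff_reflTransGen]

lemma not_preconnectedOn_pair {a b : V} (hab : a ≠ b) (hnadj : ¬G.Adj a b) :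
    ¬PreconnectedOn G {a, b} := by
  intro h
  rcases (h a (by simp) b (by simp)).cases_head with rfl | ⟨c, ⟨-, hc, hac⟩, -⟩
  · exact hab rfl
  · rcases hc with rfl | rfl
    exacts [G.irrefl hac, hnadj hac]

lemma PreconnectedOn.of_insert_twin {S : Set V} {u v : V} (hu : u ∈ S) (hv : v ∉ S)
    (htwin : ∀ z ∈ S, z ≠ u → (G.Adj v z ↔ G.Adj u z))
    (h : PreconnectedOn G (insert v S)) : PreconnectedOn G S := by
  classical
  -- Collapsing `v` onto its twin `u` maps walks in `insert v S` to walks in `S`.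
  let f : V → V := fun x => if x = v then u else x
  have hf : ∀ x ∈ S, f x = x := fun x hx => if_neg (ne_of_mem_of_not_mem hx hv)
  have hfv : f v = u := if_pos rfl
  have hfS : ∀ x ∈ insert v S, f x ∈ S := by
    rintro x (rfl | hx)
    exacts [hfv ▸ hu, (hf x hx).symm ▸ hx]
  intro a ha b hb
  have hstep : ∀ x y, x ∈ insert v S ∧ y ∈ insert v S ∧ G.Adj x y →
      Relation.ReflTransGen (fun x y => x ∈ S ∧ y ∈ S ∧ G.Adj x y) (f x) (f y) := by
    rintro x y ⟨hx, hy, hxy⟩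
    by_cases hfxy : f x = f y
    · rw [hfxy]
    refine .single ⟨hfS x hx, hfS y hy, ?_⟩
    rcases hx with rfl | hx <;> rcases hy with rfl | hy
    · exact absurd hxy (G.irrefl)
    · rw [hfv, hf y hy] at hfxy ⊢
      exact (htwin y hy (Ne.symm hfxy)).1 hxy
    · rw [hfv, hf x hx] at hfxy ⊢
      exact ((htwin x hx hfxy).1 hxy.symm).symm
    · rwa [hf x hx, hf y hy]
  have hab : Relation.ReflTransGen _ (f a) (f b) := (h a (.inr ha) b (.inr hb)).lift' f hstep
  rwa [hf a ha, hf b hb] at hab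

lemma not_preconnectedOn_insert_twin {S : Set V} {u v : V} (hu : u ∈ S) (hv : v ∉ S)
    (htwin : ∀ z ∈ S, z ≠ u → (G.Adj v z ↔ G.Adj u z))
    (h : S.Subsingleton ∨ ¬PreconnectedOn G S ∨ ¬PreconnectedOn Gᶜ S) :
    ¬PreconnectedOn G (insert v S) ∨ ¬PreconnectedOn Gᶜ (insert v S) := by
  have hvu : v ≠ u := fun h => hv (h ▸ hu)
  rcases h with hS | hS | hS
  · obtain rfl : S = {u} := hS.eq_singleton_of_mem hu
    by_cases hadj : G.Adj v u
    · exact .inr (not_preconnectedOn_pair hvu fun h => ((compl_adj G v u).1 h).2 hadj)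
    · exact .inl (not_preconnectedOn_pair hvu hadj)
  · exact .inl (mt (PreconnectedOn.of_insert_twin hu hv htwin) hS)
  · refine .inr (mt (PreconnectedOn.of_insert_twin hu hv fun z hz hzu => ?_) hS)
    have hzv : z ≠ v := ne_of_mem_of_not_mem hz hv
    rw [compl_adj, compl_adj, htwin z hz hzu]
    exact and_congr_left fun _ => iff_of_true (Ne.symm hzv) (Ne.symm hzu)

lemma List.setOf_mem_take_add_one {α : Type*} {l : List α} {i : ℕ} (hi : i < l.length) :
    {x | x ∈ l.take (i + 1)} = insert l[i] {x | x ∈ l.take i} := by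
  ext x
  simp only [Set.mem_ofPred_eq, Set.mem_insert_iff, List.take_add_one,
    List.getElem?_eq_getElem hi, Option.toList_some, List.mem_append, List.mem_singleton]
  exact or_comm

lemma List.Nodup.getElem_notMem_take {α : Type*} {l : List α} (hl : l.Nodup) {i : ℕ}
    (hi : i < l.length) : l[i] ∉ l.take i := by
  rw [List.mem_take_iff_getElem]
  rintro ⟨j, hj, hji⟩
  have := (hl.getElem_inj_iff).1 hji
  omega

lemma IsCograph.subsingleton_or_not_preconnectedOn_univ (hcog : IsCograph G) :
    (Set.univ : Set V).Subsingleton ∨ ¬PreconnectedOn G Set.univ ∨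
      ¬PreconnectedOn Gᶜ Set.univ := by
  obtain ⟨l, hl, hmem, htwin⟩ := hcog
  suffices ∀ i ≤ l.length, {x | x ∈ l.take i}.Subsingleton ∨
      ¬PreconnectedOn G {x | x ∈ l.take i} ∨ ¬PreconnectedOn Gᶜ {x | x ∈ l.take i} by
    have h := this l.length le_rfl
    have huniv : {x | x ∈ l} = Set.univ := Set.eq_univ_of_forall hmem
    rwa [List.take_length, huniv] at h
  intro i
  induction i with
  | zero => simp
  | succ i ih =>
    intro hi
    simp only [List.setOf_mem_take_add_one hi]
    rcases Nat.eq_zero_or_pos i with rfl | hpos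
    · simp
    obtain ⟨j, hji, hj⟩ := htwin ⟨i, hi⟩ hpos.ne'
    simp only [List.get_eq_getElem] at hj hji
    refine .inr (not_preconnectedOn_insert_twin (u := l[j]) ?_ (hl.getElem_notMem_take hi)
      (fun z hz hzj => hj z ?_ ?_ hzj) (ih (by omega)))
    · exact List.mem_take_iff_getElem.2 ⟨j, by omega, rfl⟩
    · exact List.take_subset_take_left _ (by omega) hz
    · exact fun h => hl.getElem_notMem_take hi (h ▸ hz)

theorem IsCograph.not_preconnected_compl [Nontrivial V] (hcog : IsCograph G)
    (hG : G.Preconnected) : ¬Gᶜ.Preconnected := by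
  rcases hcog.subsingleton_or_not_preconnectedOn_univ with h | h | h
  · exact absurd h Set.nontrivial_univ.not_subsingleton
  · exact absurd (preconnectedOn_univ_iff.2 hG) h
  · rwa [preconnectedOn_univ_iff] at h

lemma mu_le {m : ℕ} (h : ∀ X : Set V, IsMVSet G X → X.ncard ≤ m) : mu G ≤ m :=
  csSup_le' fun _ ⟨X, hX, hn⟩ => hn ▸ h X hX

lemma muT_le {m : ℕ} (h : ∀ X : Set V, IsTMVSet G X → X.ncard ≤ m) : muT G ≤ m :=
  csSup_le' fun _ ⟨X, hX, hn⟩ => hn ▸ h X hX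

variable [Fintype V]

lemma IsUniversal.isEnabling {v : V} (h : _root_.IsUniversal G v) : IsEnabling G v :=
  fun u hu _ => h u hu

lemma IsEnabling.adj {v x y : V} (hv : IsEnabling G v) (hxv : x ≠ v) (hyv : y ≠ v)
    (hxy : x ≠ y) (hnadj : ¬G.Adj x y) : G.Adj v x := by
  refine hv x hxv ?_
  have hsub : G.neighborSet x \ {v} ⊆ ({x, y, v} : Set V)ᶜ := by
    rintro t ⟨hxt, htv⟩
    simp only [Set.mem_compl_iff, Set.mem_insert_iff, Set.mem_singleton_iff, not_or]
    exact ⟨fun h => G.irrefl (h ▸ hxt), fun h => hnadj (h ▸ hxt), htv⟩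
  have hcard := Set.ncard_le_ncard hsub
  have h3 : ({x, y, v} : Set V).ncard = 3 := Set.ncard_eq_three.2 ⟨x, y, v, hxy, hxv, hyv, rfl⟩
  have h3le := Set.ncard_le_card ({x, y, v} : Set V)
  rw [h3, Nat.card_eq_fintype_card] at h3le
  rw [Set.ncard_compl, h3, Nat.card_eq_fintype_card] at hcard
  omega

lemma IsEnabling.isMVSet_compl_singleton {v : V} (hv : IsEnabling G v) : IsMVSet G {v}ᶜ := by
  intro x hx y hy
  refine visible_of_exists_common_adj fun hne hadj => ⟨v, by simp, ?_, ?_⟩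
  · exact (hv.adj hx hy hne hadj).symm
  · exact hv.adj hy hx hne.symm fun h => hadj h.symm

lemma exists_not_adj_of_ncard_neighborSet_sdiff_lt {u z : V} (huz : u ≠ z)
    (hdeg : (G.neighborSet u \ {z}).ncard < Fintype.card V - 2) :
    ∃ y, y ≠ u ∧ y ≠ z ∧ ¬G.Adj u y := by
  by_contra! h
  have hsub : ({u, z} : Set V)ᶜ ⊆ G.neighborSet u \ {z} := by
    intro t ht
    simp only [Set.mem_compl_iff, Set.mem_insert_iff, Set.mem_singleton_iff, not_or] at ht
    exact ⟨h t ht.1 ht.2, ht.2⟩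
  have hcard := Set.ncard_le_ncard hsub
  rw [Set.ncard_compl, Set.ncard_pair huz, Nat.card_eq_fintype_card] at hcard
  omega

lemma not_isMVSet_of_compl_subset_singleton {z : V} (hz : ¬IsEnabling G z) (hX : Xᶜ ⊆ {z}) :
    ¬IsMVSet G X := by
  intro hMV
  obtain ⟨u, huz, hdeg, hzu⟩ : ∃ u, u ≠ z ∧ (G.neighborSet u \ {z}).ncard <
      Fintype.card V - 2 ∧ ¬G.Adj z u := by simpa [IsEnabling] using hz
  obtain ⟨y, hyu, hyz, huy⟩ := exists_not_adj_of_ncard_neighborSet_sdiff_lt huz hdeg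
  have mem_of_ne : ∀ {t}, t ≠ z → t ∈ X := fun {t} htz => by_contra fun ht => htz (hX ht)
  obtain ⟨w, hwX, huw⟩ :=
    (hMV u (mem_of_ne huz) y (mem_of_ne hyz)).exists_adj_notMem hyu.symm huy
  exact hzu (hX hwX ▸ huw).symm

lemma ncard_le_card_sub_two [Nonempty V] (h : ∀ z, ¬Xᶜ ⊆ {z}) :
    X.ncard ≤ Fintype.card V - 2 := by
  have hnt : Xᶜ.Nontrivial := by
    by_contra hnt
    rcases (Set.not_nontrivial_iff.1 hnt).eq_empty_or_singleton with he | ⟨z, hz⟩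
    · exact h (Classical.arbitrary V) (by simp [he])
    · exact h z hz.le
  have hcard := Set.ncard_add_ncard_compl X
  rw [Nat.card_eq_fintype_card] at hcard
  have := Set.one_lt_ncard_iff_nontrivial.2 hnt
  omega

lemma bddAbove_ncard (p : Set V → Prop) : BddAbove {n | ∃ X : Set V, p X ∧ X.ncard = n} := by
  refine ⟨Fintype.card V, ?_⟩
  rintro _ ⟨X, -, rfl⟩
  exact Nat.card_eq_fintype_card (α := V) ▸ Set.ncard_le_card X

lemma le_mu (h : IsMVSet G X) : X.ncard ≤ mu G :=
  le_csSup (bddAbove_ncard _) ⟨X, h, rfl⟩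

lemma le_muT (h : IsTMVSet G X) : X.ncard ≤ muT G :=
  le_csSup (bddAbove_ncard _) ⟨X, h, rfl⟩

lemma muT_le_mu : muT G ≤ mu G :=
  muT_le fun _ hX => le_mu hX.isMVSet

lemma mu_le_muT_of_isUniversal {w : V} (hw : _root_.IsUniversal G w) : mu G ≤ muT G := by
  refine mu_le fun X hX => ?_
  by_cases hwX : w ∈ X
  · by_cases hXu : X = Set.univ
    · subst hXu
      exact le_muT fun x y => hX x trivial y trivial
    -- Trade `w` for a vertex outside `X`.
    obtain ⟨z, hzX⟩ := Set.nonempty_compl.2 hXu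
    have hzw : z ≠ w := fun h => hzX (h ▸ hwX)
    have hcard : (insert z (X \ {w})).ncard = X.ncard := by
      rw [Set.ncard_insert_of_notMem (fun h => hzX h.1), Set.ncard_sdiff_singleton_add_one hwX]
    exact hcard ▸ le_muT (isTMVSet_of_isUniversal hw (by simp [hzw.symm]))
  · exact le_muT (isTMVSet_of_isUniversal hw hwX)

lemma card_sub_one_le_mu {v : V} (hv : IsEnabling G v) : Fintype.card V - 1 ≤ mu G := by
  have := le_mu hv.isMVSet_compl_singleton
  rwa [Set.ncard_compl, Set.ncard_singleton, Nat.card_eq_fintype_card] at this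

lemma card_sub_two_le_muT {a b : V} (hab : ¬Gᶜ.Reachable a b) :
    Fintype.card V - 2 ≤ muT G := by
  have hne : a ≠ b := fun h => hab (h ▸ .refl a)
  have := le_muT (isTMVSet_compl_pair hab)
  rwa [Set.ncard_compl, Set.ncard_pair hne, Nat.card_eq_fintype_card] at this

lemma muT_le_card_sub_two [Nonempty V] (h : ∀ v, ¬_root_.IsUniversal G v) :
    muT G ≤ Fintype.card V - 2 :=
  muT_le fun _ hX => ncard_le_card_sub_two fun z hz =>
    not_isTMVSet_of_compl_subset_singleton (h z) hz hX

lemma mu_le_card_sub_two [Nonempty V] (h : ∀ v, ¬IsEnabling G v) :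
    mu G ≤ Fintype.card V - 2 :=
  mu_le fun _ hX => ncard_le_card_sub_two fun z hz =>
    not_isMVSet_of_compl_subset_singleton (h z) hz hX

end

theorem stmt_4 {V : Type*} [Fintype V] (G : SimpleGraph V) (hG : G.Connected)
    (hcog : IsCograph G) :
    mu G = muT G ↔ (∃ v, _root_.IsUniversal G v) ∨ ∀ v, ¬ IsEnabling G v := by
  have : Nonempty V := hG.nonempty
  constructor
  · intro heq
    by_contra! h
    obtain ⟨hnu, v, hv⟩ := h
    have : Nontrivial V := nontrivial_of_not_isUniversal (hnu v)
    have hn := Fintype.one_lt_card (α := V)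
    have hmu := card_sub_one_le_mu hv
    have hmuT := muT_le_card_sub_two hnu
    omega
  · rintro (⟨w, hw⟩ | hen)
    · exact (mu_le_muT_of_isUniversal hw).antisymm muT_le_mu
    · have : Nontrivial V :=
        nontrivial_of_not_isUniversal (v := Classical.arbitrary V) fun hv => hen _ hv.isEnabling
      obtain ⟨a, b, hab⟩ : ∃ a b, ¬Gᶜ.Reachable a b := by
        simpa [Preconnected] using hcog.not_preconnected_compl hG.preconnected
      exact ((mu_le_card_sub_two hen).trans (card_sub_two_le_muT hab)).antisymm muT_le_mu
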